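/- arXiv:1001.0991 — 2 statements merged into one kernel-verified Lean document; each statement's English description precedes it below -/
import Mathlib

section
/- Let τ ∈ ℂ with Im(τ) > 0, let n ≥ 2 be an integer, and let z ∈ S(τ) (note S(nτ) = S(τ)). Then F(z; nτ) = (1/n) · Σ_{k=0}^{n−1} F( (z + πi(n−2k−1))/n ; τ ), where each argument (z + πi(n−2k−1))/n lies in S(τ). -/
open MeasureTheory

noncomputable section

/-- The strip `S(τ) = {z : |Re(z ⋅ conj τ)| < π Im τ}`. -/
def stripS (τ : ℂ) : Set ℂ := {z : ℂ | |(z * (starRingEnd ℂ) τ).re| < Real.pi * τ.im}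

/-- The parallelogram `P(τ) = S(τ) ∩ {z : |Im z| < π Im τ}`. -/
def parP (τ : ℂ) : Set ℂ := stripS τ ∩ {z : ℂ | |z.im| < Real.pi * τ.im}

/-- The function `F(z;τ) = ∫_ℝ dx / ((1 + e^{z + iτx})(1 + e^x))`. -/
def Fk (z τ : ℂ) : ℂ :=
  ∫ x : ℝ, 1 / ((1 + Complex.exp (z + Complex.I * τ * x)) * (1 + Complex.exp (x : ℂ)))


/-!
Put `v = z + i n τ x`. The numbers `-exp ((v + π i (n - 2k - 1)) / n)`, `k < n`, are the `n`
distinct `n`-th roots of `-exp v`: they are `ζ^k s` with `ζ = e^{-2πi/n}` primitive and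
`s^n = -exp v`. Since `(1 - ζ^k s)⁻¹ = ∑_{m<n} (ζ^k s)^m / (1 - s^n)` and `∑ₖ ζ^{km} = 0` for
`0 < m < n`, this gives the partial fraction identity
`∑ₖ 1 / (1 + exp ((v + π i (n - 2k - 1)) / n)) = n / (1 + exp v)`.
Multiplying by `1 / (1 + eˣ)` and integrating over `x` is the theorem. The integrals exist
because `exp w = -1` only for `w ∈ π i (2ℤ + 1)`, which lies outside `S(τ)`, and the integrand
decays like `e^{-x}` as `x → ∞` and like `e^{x Im τ}` as `x → -∞`.
-/

open Complex ComplexConjugate Finset Filter Asymptotics Topology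

theorem IsPrimitiveRoot.sum_pow_pow_eq_ite {R : Type*} [CommRing R] [IsDomain R] {ζ : R}
    {n m : ℕ} (hζ : IsPrimitiveRoot ζ n) (hm : m < n) :
    ∑ k ∈ range n, (ζ ^ k) ^ m = if m = 0 then (n : R) else 0 := by
  split_ifs with h0
  · simp [h0]
  · have hne : 1 - ζ ^ m ≠ 0 := sub_ne_zero.2 (hζ.pow_ne_one_of_pos_of_lt h0 hm).symm
    refine (mul_eq_zero.1 ?_).resolve_left hne
    simp_rw [← pow_mul, mul_comm _ m, pow_mul]
    rw [mul_neg_geom_sum, ← pow_mul, mul_comm, pow_mul, hζ.pow_eq_one, one_pow, sub_self]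

theorem IsPrimitiveRoot.sum_inv_one_sub_pow_mul {K : Type*} [Field K] {ζ : K} {n : ℕ}
    (hζ : IsPrimitiveRoot ζ n) {s : K} (hs : 1 - s ^ n ≠ 0) :
    ∑ k ∈ range n, (1 - ζ ^ k * s)⁻¹ = n * (1 - s ^ n)⁻¹ := by
  have hgeom (k : ℕ) : (1 - ζ ^ k * s) * ∑ m ∈ range n, (ζ ^ k * s) ^ m = 1 - s ^ n := by
    rw [mul_neg_geom_sum, mul_pow, ← pow_mul, mul_comm k, pow_mul, hζ.pow_eq_one, one_pow,
      one_mul]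
  have hterm (k : ℕ) :
      (1 - ζ ^ k * s)⁻¹ = (∑ m ∈ range n, (ζ ^ k * s) ^ m) * (1 - s ^ n)⁻¹ := by
    have hk : 1 - ζ ^ k * s ≠ 0 := left_ne_zero_of_mul (hgeom k ▸ hs)
    rw [eq_mul_inv_iff_mul_eq₀ hs, ← hgeom k, inv_mul_cancel_left₀ hk]
  rw [sum_congr rfl fun k _ => hterm k, ← sum_mul, sum_comm]
  simp_rw [mul_pow, ← sum_mul]
  rw [sum_congr rfl fun m hm => by rw [hζ.sum_pow_pow_eq_ite (mem_range.1 hm)]]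
  have hn : n ≠ 0 := by rintro rfl; simp at hs
  simp [hn]

theorem sum_inv_one_add_exp_div {n : ℕ} (hn : n ≠ 0) {v : ℂ} (hv : 1 + exp v ≠ 0) :
    ∑ k ∈ range n, (1 + exp ((v + Real.pi * I * (n - 2 * k - 1)) / n))⁻¹
      = n * (1 + exp v)⁻¹ := by
  have hn' : (n : ℂ) ≠ 0 := Nat.cast_ne_zero.2 hn
  set s := -exp ((v + Real.pi * I * (n - 1)) / n)
  have hsn : 1 - s ^ n = 1 + exp v := by
    rw [neg_pow, ← exp_nat_mul, mul_div_cancel₀ _ hn', mul_sub, mul_one, add_sub, exp_sub,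
      exp_add, mul_comm _ (n : ℂ), exp_nat_mul, exp_pi_mul_I]
    have : ((-1 : ℂ) ^ n) ^ 2 = 1 := by rw [← pow_mul, mul_comm, pow_mul]; norm_num
    linear_combination (exp v) * this
  have hterm (k : ℕ) : 1 + exp ((v + Real.pi * I * (n - 2 * k - 1)) / n)
      = 1 - (exp (2 * Real.pi * I / n))⁻¹ ^ k * s := by
    rw [← exp_neg, ← exp_nat_mul, mul_neg, sub_neg_eq_add, ← exp_add]
    congr 2
    field_simp
    ring
  simp_rw [hterm]
  rw [(isPrimitiveRoot_exp n hn).inv.sum_inv_one_sub_pow_mul (hsn ▸ hv), hsn]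

lemma im_pos_of_mem_stripS {τ w : ℂ} (hw : w ∈ stripS τ) : 0 < τ.im :=
  pos_of_mul_pos_right ((abs_nonneg _).trans_lt hw) Real.pi_pos.le

lemma re_add_pi_mul_I_mul_conj (w τ : ℂ) (a : ℝ) :
    ((w + Real.pi * I * a) * conj τ).re = (w * conj τ).re + Real.pi * a * τ.im := by
  simp only [mul_re, add_re, ofReal_re, I_re, mul_zero, ofReal_im, I_im, mul_one, sub_self,
    zero_mul, mul_im, add_zero, conj_re, add_im, zero_add, conj_im, mul_neg, sub_neg_eq_add]
  ring

lemma re_add_I_mul_ofReal_mul_conj (w τ : ℂ) (x : ℝ) :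
    ((w + I * τ * x) * conj τ).re = (w * conj τ).re := by
  simp only [mul_re, add_re, I_re, zero_mul, I_im, one_mul, zero_sub, ofReal_re, neg_mul,
    mul_im, zero_add, ofReal_im, mul_zero, sub_zero, conj_re, add_im, conj_im, mul_neg,
    sub_neg_eq_add]
  ring

lemma add_I_mul_ofReal_mem_stripS {τ w : ℂ} (hw : w ∈ stripS τ) (x : ℝ) :
    w + I * τ * x ∈ stripS τ := by
  rw [stripS, Set.mem_ofPred_eq, re_add_I_mul_ofReal_mul_conj]
  exact hw

lemma stripS_ofReal_mul {r : ℝ} (hr : 0 < r) (τ : ℂ) : stripS (r * τ) = stripS τ := by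
  ext w
  simp only [stripS, Set.mem_ofPred_eq, map_mul, conj_ofReal, mul_left_comm w, re_ofReal_mul,
    im_ofReal_mul, abs_mul, abs_of_pos hr, mul_left_comm Real.pi]
  exact mul_lt_mul_iff_right₀ hr

lemma one_add_exp_ne_zero_of_mem_stripS {τ w : ℂ} (hw : w ∈ stripS τ) : 1 + exp w ≠ 0 := by
  intro h
  obtain ⟨m, hm⟩ : ∃ m : ℤ, w = Real.pi * I + m * (2 * Real.pi * I) := by
    rw [← exp_eq_exp_iff_exists_int, exp_pi_mul_I]
    linear_combination h
  have hw' : w = 0 + Real.pi * I * ((2 * m + 1 : ℤ) : ℝ) := by rw [hm]; push_cast; ring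
  have hodd : (1 : ℝ) ≤ |((2 * m + 1 : ℤ) : ℝ)| := by
    exact_mod_cast Int.one_le_abs (by omega)
  have hτ := im_pos_of_mem_stripS hw
  rw [stripS, Set.mem_ofPred_eq, hw', re_add_pi_mul_I_mul_conj, zero_mul, zero_re, zero_add,
    abs_mul, abs_mul, abs_of_pos Real.pi_pos, abs_of_pos hτ] at hw
  nlinarith [mul_pos Real.pi_pos hτ]

lemma add_pi_mul_I_div_mem_stripS {τ z : ℂ} (hz : z ∈ stripS τ) {n k : ℕ} (hk : k < n) :
    (z + Real.pi * I * (n - 2 * k - 1)) / n ∈ stripS τ := by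
  have hn : (0 : ℝ) < n := by exact_mod_cast (Nat.zero_le k).trans_lt hk
  have hτ := im_pos_of_mem_stripS hz
  have ha : |(n - 2 * k - 1 : ℝ)| ≤ n - 1 := by
    have : (k : ℝ) + 1 ≤ n := by exact_mod_cast hk
    rw [abs_le]; constructor <;> linarith [(Nat.cast_nonneg k : (0 : ℝ) ≤ k)]
  have hre : ((z + Real.pi * I * (n - 2 * k - 1)) / n * conj τ).re
      = ((z * conj τ).re + Real.pi * (n - 2 * k - 1) * τ.im) / n := by
    have := re_add_pi_mul_I_mul_conj z τ (n - 2 * k - 1)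
    push_cast at this
    rw [div_mul_eq_mul_div, div_natCast_re, this]
  rw [stripS, Set.mem_ofPred_eq, hre, abs_div, abs_of_pos hn, div_lt_iff₀ hn]
  calc |(z * conj τ).re + Real.pi * (n - 2 * k - 1) * τ.im|
      ≤ |(z * conj τ).re| + Real.pi * |(n - 2 * k - 1 : ℝ)| * τ.im := by
        refine (abs_add_le _ _).trans_eq ?_
        rw [abs_mul, abs_mul, abs_of_pos Real.pi_pos, abs_of_pos hτ]
    _ < Real.pi * τ.im + Real.pi * (n - 1) * τ.im := add_lt_add_of_lt_of_le hz (by gcongr)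
    _ = Real.pi * τ.im * n := by ring

lemma one_add_exp_ofReal_ne_zero (x : ℝ) : 1 + exp (x : ℂ) ≠ 0 := by
  rw [← ofReal_exp, ← ofReal_one, ← ofReal_add, ofReal_ne_zero]
  positivity

lemma tendsto_inv_one_add_exp_comap_re_atBot :
    Tendsto (fun u : ℂ => (1 + exp u)⁻¹) (comap re atBot) (𝓝 1) := by
  simpa using
    (tendsto_const_nhds.add tendsto_exp_comap_re_atBot).inv₀ (by norm_num : (1 : ℂ) + 0 ≠ 0)

lemma isBigO_inv_one_add_exp_comap_re_atTop :
    (fun u : ℂ => (1 + exp u)⁻¹) =O[comap re atTop] fun u => Real.exp (-u.re) := by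
  have hneg : Tendsto (fun u : ℂ => -u) (comap re atTop) (comap re atBot) :=
    tendsto_comap_iff.2 <| by
      simpa [Function.comp_def] using (tendsto_neg_atTop_atBot (G := ℝ)).comp tendsto_comap
  have hsymm (u : ℂ) : (1 + exp u)⁻¹ = exp (-u) * (1 + exp (-u))⁻¹ := by
    calc (1 + exp u)⁻¹ = (exp u * (1 + exp (-u)))⁻¹ := by
          rw [mul_add, exp_neg, mul_inv_cancel₀ (exp_ne_zero u), mul_one, add_comm]
      _ = exp (-u) * (1 + exp (-u))⁻¹ := by rw [mul_inv, exp_neg]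
  have := (isBigO_refl (fun u : ℂ => exp (-u)) _).mul
    ((tendsto_inv_one_add_exp_comap_re_atBot.comp hneg).isBigO_one ℂ)
  simp only [Function.comp_def, mul_one, ← hsymm] at this
  simpa [norm_exp] using this.norm_right

lemma re_add_I_mul_ofReal (w τ : ℂ) (x : ℝ) : (w + I * τ * x).re = w.re - τ.im * x := by
  simp [sub_eq_add_neg]

lemma tendsto_add_I_mul_ofReal_atTop {τ : ℂ} (hτ : 0 < τ.im) (w : ℂ) :
    Tendsto (fun x : ℝ => w + I * τ * x) atTop (comap re atBot) := by
  refine tendsto_comap_iff.2 ?_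
  simp only [Function.comp_def, re_add_I_mul_ofReal, sub_eq_add_neg]
  exact tendsto_atBot_add_const_left _ _
    (tendsto_neg_atTop_atBot.comp (tendsto_id.const_mul_atTop hτ))

lemma tendsto_add_I_mul_ofReal_atBot {τ : ℂ} (hτ : 0 < τ.im) (w : ℂ) :
    Tendsto (fun x : ℝ => w + I * τ * x) atBot (comap re atTop) := by
  refine tendsto_comap_iff.2 ?_
  simp only [Function.comp_def, re_add_I_mul_ofReal, sub_eq_add_neg]
  exact tendsto_atTop_add_const_left _ _
    (tendsto_neg_atBot_atTop.comp (tendsto_id.const_mul_atBot hτ))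

lemma integrable_Fk_integrand {τ w : ℂ} (hw : w ∈ stripS τ) :
    Integrable fun x : ℝ => 1 / ((1 + exp (w + I * τ * x)) * (1 + exp (x : ℂ))) := by
  have hτ := im_pos_of_mem_stripS hw
  simp_rw [one_div, mul_inv]
  have hcont :
      Continuous fun x : ℝ => (1 + exp (w + I * τ * x))⁻¹ * (1 + exp (x : ℂ))⁻¹ :=
    (Continuous.inv₀ (by fun_prop) fun x =>
      one_add_exp_ne_zero_of_mem_stripS (add_I_mul_ofReal_mem_stripS hw x)).mul
      (Continuous.inv₀ (by fun_prop) one_add_exp_ofReal_ne_zero)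
  have hreal_top : Tendsto (fun x : ℝ => (x : ℂ)) atTop (comap re atTop) :=
    tendsto_comap_iff.2 tendsto_id
  have hreal_bot : Tendsto (fun x : ℝ => (x : ℂ)) atBot (comap re atBot) :=
    tendsto_comap_iff.2 tendsto_id
  refine hcont.locallyIntegrable.integrable_of_isBigO_atBot_atTop
    (g := fun x : ℝ => Real.exp (-(w + I * τ * x).re)) (g' := fun x : ℝ => Real.exp (-1 * x))
    ?_ ?_ ?_ ?_
  · simpa using
      (isBigO_inv_one_add_exp_comap_re_atTop.comp_tendsto
        (tendsto_add_I_mul_ofReal_atBot hτ w)).mul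
        ((tendsto_inv_one_add_exp_comap_re_atBot.comp hreal_bot).isBigO_one ℝ)
  · have hexp : (fun x : ℝ => Real.exp (-(w + I * τ * x).re))
        = fun x => Real.exp (-w.re) * Real.exp (τ.im * x) := by
      ext x
      rw [re_add_I_mul_ofReal, ← Real.exp_add, neg_sub, sub_eq_neg_add]
    rw [hexp]
    exact ⟨Set.Iic 0, Iic_mem_atBot 0, (integrableOn_exp_mul_Iic hτ 0).const_mul _⟩
  · simpa using
      ((tendsto_inv_one_add_exp_comap_re_atBot.comp
        (tendsto_add_I_mul_ofReal_atTop hτ w)).isBigO_one ℝ).mul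
        (isBigO_inv_one_add_exp_comap_re_atTop.comp_tendsto hreal_top)
  · exact ⟨Set.Ioi 0, Ioi_mem_atTop 0, integrableOn_exp_mul_Ioi neg_one_lt_zero 0⟩

lemma Fk_integrand_natCast_mul_eq_sum {τ z : ℂ} (hz : z ∈ stripS τ) {n : ℕ} (hn : n ≠ 0)
    (x : ℝ) :
    1 / ((1 + exp (z + I * (n * τ) * x)) * (1 + exp (x : ℂ))) = 1 / (n : ℂ) *
      ∑ k ∈ range n,
        1 / ((1 + exp ((z + Real.pi * I * (n - 2 * k - 1)) / n + I * τ * x))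
          * (1 + exp (x : ℂ))) := by
  have hn' : (n : ℂ) ≠ 0 := Nat.cast_ne_zero.2 hn
  have hz' : z ∈ stripS (n * τ) := by
    rwa [← ofReal_natCast, stripS_ofReal_mul (Nat.cast_pos.2 (Nat.pos_of_ne_zero hn))]
  have hsum := sum_inv_one_add_exp_div hn
    (one_add_exp_ne_zero_of_mem_stripS (add_I_mul_ofReal_mem_stripS hz' x))
  have hshift (k : ℕ) : (z + I * (n * τ) * x + Real.pi * I * (n - 2 * k - 1)) / n
      = (z + Real.pi * I * (n - 2 * k - 1)) / n + I * τ * x := by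
    field_simp
    ring
  simp_rw [hshift] at hsum
  simp_rw [one_div, mul_inv, ← sum_mul, hsum]
  field_simp

theorem stmt1_general (τ : ℂ) (n : ℕ) (hn : 2 ≤ n) (z : ℂ) (hz : z ∈ stripS τ) :
    Fk z (n * τ) = (1 / (n : ℂ)) * ∑ k ∈ Finset.range n,
      Fk ((z + Real.pi * Complex.I * ((n : ℂ) - 2 * k - 1)) / n) τ := by
  simp only [Fk]
  rw [← integral_finsetSum _ fun k hk =>
      integrable_Fk_integrand (add_pi_mul_I_div_mem_stripS hz (mem_range.1 hk)),
    ← integral_const_mul]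
  congr 1 with x
  exact Fk_integrand_natCast_mul_eq_sum hz (by omega) x

theorem stmt1 (τ : ℂ) (hτ : 0 < τ.im) (n : ℕ) (hn : 2 ≤ n) (z : ℂ) (hz : z ∈ stripS τ) :
    Fk z (n * τ) = (1 / (n : ℂ)) * ∑ k ∈ Finset.range n,
      Fk ((z + Real.pi * Complex.I * ((n : ℂ) - 2 * k - 1)) / n) τ :=
  stmt1_general τ n hn z hz
end
end

section
/- For every z ∈ ℂ with |Im(z)| < π and z ≠ 0, one has F(z; i) = ∫_ℝ 1/((1 + exp(z + ix)) · (1 + exp(x))) dx = z/(e^z − 1). -/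
/-!
With `a = exp z` the integrand is `eˣ / ((eˣ + a) (eˣ + 1))`, that is `(a - 1)⁻¹` times the
derivative of `log (eˣ + 1) - log (eˣ + a)`. Since `|Im z| < π`, `a` lies in the slit plane, hence
so does `eˣ + a`, and this primitive is smooth; it tends to `0` at `+∞` and to `-log a = -z`
at `-∞`. Integrability follows from `‖s + a‖ ≥ c (s + 1)` for `s ≥ 0`.
-/

open MeasureTheory

noncomputable section

section

open Complex Filter Topology Set

variable {a b : ℂ}

lemma exp_mem_slitPlane_of_abs_im_lt {z : ℂ} (hz : |z.im| < Real.pi) : exp z ∈ slitPlane := by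
  obtain ⟨hlo, hhi⟩ := abs_lt.mp hz
  rw [exp_mem_slitPlane, (toIocMod_eq_self _).2 ⟨hlo, by linarith⟩]
  exact hhi.ne

lemma ofReal_add_mem_slitPlane {s : ℝ} (hs : 0 ≤ s) (hb : b ∈ slitPlane) :
    (s : ℂ) + b ∈ slitPlane := by
  rcases mem_slitPlane_iff.1 hb with h | h
  · exact mem_slitPlane_iff.2 (Or.inl (by rw [add_re, ofReal_re]; linarith))
  · exact mem_slitPlane_iff.2 (Or.inr (by simpa using h))

/-- `(s + a) / (s + 1)` runs through the segment from `1` to `a`, a compact subset of the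
slit plane, so its norm is bounded below. -/
lemma exists_pos_mul_add_one_le_norm_ofReal_add (ha : a ∈ slitPlane) :
    ∃ c > 0, ∀ s : ℝ, 0 ≤ s → c * (s + 1) ≤ ‖(s : ℂ) + a‖ := by
  have hseg : ∀ t ∈ Icc (0 : ℝ) 1, 1 + t • (a - 1) ∈ slitPlane := fun t ht =>
    starConvex_one_slitPlane.add_smul_mem (by simpa using ha) ht.1 ht.2
  obtain ⟨t₀, ht₀, hmin⟩ := isCompact_Icc.exists_isMinOn (nonempty_Icc.2 zero_le_one)
    (f := fun t : ℝ => ‖1 + t • (a - 1)‖) (by fun_prop)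
  refine ⟨_, norm_pos_iff.2 (slitPlane_ne_zero (hseg t₀ ht₀)), fun s hs => ?_⟩
  have hs1 : 0 < s + 1 := by linarith
  have ht : (s + 1)⁻¹ ∈ Icc (0 : ℝ) 1 := ⟨by positivity, inv_le_one_of_one_le₀ (by linarith)⟩
  have hfac : (s : ℂ) + a = ((s + 1 : ℝ) : ℂ) * (1 + (s + 1)⁻¹ • (a - 1)) := by
    have : (s + 1 : ℂ) ≠ 0 := mod_cast hs1.ne'
    rw [real_smul]; push_cast; field_simp; ring
  rw [hfac, norm_mul, norm_real, Real.norm_of_nonneg hs1.le, mul_comm]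
  exact mul_le_mul_of_nonneg_left (hmin ht) hs1.le

lemma integrable_exp_div_exp_add_one_sq :
    Integrable fun x : ℝ => Real.exp x / (Real.exp x + 1) ^ 2 := by
  have hmeas : AEStronglyMeasurable (fun x : ℝ => Real.exp x / (Real.exp x + 1) ^ 2) :=
    (by fun_prop : Measurable _).aestronglyMeasurable
  have hIic : IntegrableOn (fun x : ℝ => Real.exp x / (Real.exp x + 1) ^ 2) (Iic 0) := by
    refine (integrableOn_exp_Iic 0).mono' hmeas.restrict (ae_of_all _ fun x => ?_)
    rw [Real.norm_of_nonneg (by positivity)]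
    exact div_le_self (Real.exp_pos x).le (one_le_pow₀ (by linarith [Real.exp_pos x]))
  have hIoi : IntegrableOn (fun x : ℝ => Real.exp x / (Real.exp x + 1) ^ 2) (Ioi 0) := by
    refine (exp_neg_integrableOn_Ioi 0 one_pos).mono' hmeas.restrict (ae_of_all _ fun x => ?_)
    rw [Real.norm_of_nonneg (by positivity), neg_one_mul, Real.exp_neg,
      div_le_iff₀ (by positivity), ← div_eq_inv_mul, le_div_iff₀ (Real.exp_pos x)]
    nlinarith [Real.exp_pos x]
  rw [← integrableOn_univ, ← Iic_union_Ioi (a := 0)]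
  exact hIic.union hIoi

lemma integrable_exp_div_add_mul_add_one (ha : a ∈ slitPlane) :
    Integrable fun x : ℝ => (Real.exp x : ℂ) / ((Real.exp x + a) * (Real.exp x + 1)) := by
  obtain ⟨c, hc, hbound⟩ := exists_pos_mul_add_one_le_norm_ofReal_add ha
  refine (integrable_exp_div_exp_add_one_sq.const_mul c⁻¹).mono'
    (by fun_prop : Measurable _).aestronglyMeasurable (ae_of_all _ fun x => ?_)
  have h1 : 0 < Real.exp x + 1 := by positivity
  have hlow := hbound _ (Real.exp_pos x).le
  have hpos : 0 < ‖(Real.exp x : ℂ) + a‖ := lt_of_lt_of_le (by positivity) hlow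
  have hnorm : ‖(Real.exp x : ℂ) + 1‖ = Real.exp x + 1 := by
    rw [← ofReal_one, ← ofReal_add, norm_real, Real.norm_of_nonneg h1.le]
  rw [norm_div, norm_mul, hnorm, norm_real, Real.norm_of_nonneg (Real.exp_pos x).le,
    div_le_iff₀ (mul_pos hpos h1)]
  calc Real.exp x
      = c⁻¹ * (Real.exp x / (Real.exp x + 1) ^ 2) * (c * (Real.exp x + 1) * (Real.exp x + 1)) :=
        by field_simp
    _ ≤ _ := by gcongr

lemma hasDerivAt_log_ofReal_add (hb : b ∈ slitPlane) {s : ℝ} (hs : 0 ≤ s) :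
    HasDerivAt (fun s : ℝ => log (s + b)) (s + b)⁻¹ s := by
  simpa using ((hasDerivAt_id s).ofReal_comp.add_const b).clog_real
    (ofReal_add_mem_slitPlane hs hb)

lemma log_ofReal_add (hb : b ∈ slitPlane) {s : ℝ} (hs : 0 < s) :
    log (s + b) = Real.log s + log (1 + b / s) := by
  have hs' : (s : ℂ) ≠ 0 := ofReal_ne_zero.2 hs.ne'
  have hfac : (s : ℂ) + b = s * (1 + b / s) := by field_simp
  have hne : 1 + b / s ≠ 0 := right_ne_zero_of_mul
    (hfac ▸ slitPlane_ne_zero (ofReal_add_mem_slitPlane hs.le hb))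
  rw [hfac, log_ofReal_mul hs hne]

lemma tendsto_log_ofReal_add_sub_log_ofReal_add (ha : a ∈ slitPlane) (hb : b ∈ slitPlane) :
    Tendsto (fun s : ℝ => log (s + b) - log (s + a)) atTop (𝓝 0) := by
  have hinv : Tendsto (fun s : ℝ => (s : ℂ)⁻¹) atTop (𝓝 0) := by
    simpa using (tendsto_inv_atTop_zero (𝕜 := ℝ)).ofReal
  have hlim (c : ℂ) : Tendsto (fun s : ℝ => log (1 + c / s)) atTop (𝓝 0) := by
    simpa [div_eq_mul_inv] using ((hinv.const_mul c).const_add 1).clog (by simp)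
  refine ((hlim b).sub (hlim a)).congr' ?_ |>.trans (by simp)
  filter_upwards [eventually_gt_atTop 0] with s hs
  rw [log_ofReal_add ha hs, log_ofReal_add hb hs]
  ring

lemma integral_exp_div_add_mul_add_one (ha : a ∈ slitPlane) :
    (a - 1) * ∫ x : ℝ, (Real.exp x : ℂ) / ((Real.exp x + a) * (Real.exp x + 1)) = log a := by
  set H : ℝ → ℂ := fun s => log (s + 1) - log (s + a)
  have hH (s : ℝ) (hs : 0 ≤ s) : HasDerivAt H (((s : ℂ) + 1)⁻¹ - ((s : ℂ) + a)⁻¹) s :=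
    (hasDerivAt_log_ofReal_add one_mem_slitPlane hs).sub (hasDerivAt_log_ofReal_add ha hs)
  have hderiv (x : ℝ) : HasDerivAt (H ∘ Real.exp)
      ((a - 1) * ((Real.exp x : ℂ) / ((Real.exp x + a) * (Real.exp x + 1)))) x := by
    refine ((hH _ (Real.exp_pos x).le).scomp x (Real.hasDerivAt_exp x)).congr_deriv ?_
    have h1 : (Real.exp x : ℂ) + 1 ≠ 0 :=
      slitPlane_ne_zero (ofReal_add_mem_slitPlane (Real.exp_pos x).le one_mem_slitPlane)
    have h2 : (Real.exp x : ℂ) + a ≠ 0 :=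
      slitPlane_ne_zero (ofReal_add_mem_slitPlane (Real.exp_pos x).le ha)
    rw [real_smul]
    field_simp
    ring
  have hbot : Tendsto (H ∘ Real.exp) atBot (𝓝 (-log a)) := by
    simpa [H] using (hH 0 le_rfl).continuousAt.tendsto.comp Real.tendsto_exp_atBot
  have htop : Tendsto (H ∘ Real.exp) atTop (𝓝 0) :=
    (tendsto_log_ofReal_add_sub_log_ofReal_add ha one_mem_slitPlane).comp Real.tendsto_exp_atTop
  rw [← integral_const_mul, integral_of_hasDerivAt_of_tendsto hderiv
    ((integrable_exp_div_add_mul_add_one ha).const_mul _) hbot htop, zero_sub, neg_neg]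

lemma Fk_I_eq (z : ℂ) :
    Fk z I = ∫ x : ℝ, (Real.exp x : ℂ) / ((Real.exp x + exp z) * (Real.exp x + 1)) := by
  unfold Fk
  congr 1
  funext x
  have hx : z + I * I * x = z - x := by rw [I_mul_I]; ring
  have hsum : 1 + exp z / Real.exp x = (Real.exp x + exp z) / Real.exp x := by
    field_simp [ofReal_ne_zero.2 (Real.exp_pos x).ne']
  rw [hx, exp_sub, ← ofReal_exp, hsum, div_mul_eq_mul_div, one_div_div, add_comm 1]

end

theorem stmt6 (z : ℂ) (hz : |z.im| < Real.pi) (hz0 : z ≠ 0) :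
    Fk z Complex.I = z / (Complex.exp z - 1) := by
  open Complex in
  have ha : exp z ∈ slitPlane := exp_mem_slitPlane_of_abs_im_lt hz
  have hlog : log (exp z) = z := log_exp (neg_lt_of_abs_lt hz) (lt_of_abs_lt hz).le
  have hne : exp z - 1 ≠ 0 := fun h => hz0 (by rw [← hlog, sub_eq_zero.1 h, log_one])
  rw [Fk_I_eq, eq_div_iff hne, mul_comm, integral_exp_div_add_mul_add_one ha, hlog]

end
end
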